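/- Let λ be a regular cardinal and λ ≥ μ with μ regular, κ a cardinal, and (f_β)_{β<κ} functions from λ to μ. Then there exists an ultrafilter D uniform over λ such that no f_β(D) is uniform over μ if and only if there exists a function g : κ → μ such that for every finite F ⊆ κ, the set ⋂_{β∈F} f_β⁻¹([0, g(β))) has cardinality λ. -/

import Mathlib

/-!
An ultrafilter on `λ` is uniform exactly when it refines the filter of sets with complement of
size `< λ`, and by regularity of `μ` an ultrafilter on `μ` fails to be uniform exactly when it
contains an initial segment `[0, b)`. Given `D`, choosing such a `b = g β` for each `f_β(D)` makes
every finite intersection a member of `D`, hence of size `λ`. Conversely, the sets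
`f_β⁻¹[0, g β)` together with the co-small sets have the finite intersection property, and any
ultrafilter extending them works.
-/

open Cardinal Set

def IsUniformUltrafilter (l : Cardinal) (D : Ultrafilter l.ord.ToType) : Prop :=
  ∀ s ∈ D, #s = l

open Filter

theorem Ultrafilter.exists_Iio_mem_of_mk_lt_cof {α : Type*} [LinearOrder α] (U : Ultrafilter α)
    {t : Set α} (ht : t ∈ U) (htc : #t < Order.cof α) : ∃ b, Iio b ∈ U := by
  obtain ⟨b, hb⟩ := not_isCofinal_iff.1 fun hcof => (Order.cof_le hcof).not_gt htc
  exact ⟨b, mem_of_superset ht hb⟩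

theorem not_isUniformUltrafilter_iff {m : Cardinal} (hm : m.IsRegular)
    (U : Ultrafilter m.ord.ToType) : ¬ IsUniformUltrafilter m U ↔ ∃ b, Iio b ∈ U := by
  constructor
  · intro hU
    obtain ⟨t, ht, htm⟩ := not_forall₂.1 hU
    have htc : #t < Order.cof m.ord.ToType := by
      rw [Ordinal.cof_toType, hm.cof_ord]
      exact (mk_set_le t).trans_eq (mk_ord_toType m) |>.lt_of_ne htm
    exact U.exists_Iio_mem_of_mk_lt_cof ht htc
  · rintro ⟨b, hb⟩ hU
    exact (mk_Iio_lt b (by simp)).ne ((hU _ hb).trans (mk_ord_toType m).symm)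

theorem isUniformUltrafilter_iff_le_cocardinal {l : Cardinal} (hl : l.IsRegular)
    (D : Ultrafilter l.ord.ToType) :
    IsUniformUltrafilter l D ↔ (D : Filter l.ord.ToType) ≤ cocardinal _ hl := by
  constructor
  · intro hD s hs
    by_contra hsD
    exact (hD _ (D.compl_mem_iff_notMem.2 hsD)).not_lt (mem_cocardinal.1 hs)
  · intro hD s hs
    refine ((mk_set_le s).trans_eq (mk_ord_toType l)).antisymm (not_lt.1 fun hsl => ?_)
    exact D.compl_notMem_iff.2 hs (hD (compl_mem_cocardinal_of_card_lt hsl))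

theorem Filter.cocardinal_inf_iInf_principal_neBot {α ι : Type*} {c : Cardinal} (hc : c.IsRegular)
    (S : ι → Set α) (hS : ∀ F : Finset ι, c ≤ #(⋂ i ∈ F, S i)) :
    (cocardinal α hc ⊓ ⨅ i, 𝓟 (S i)).NeBot := by
  classical
  have hdir : Directed (· ≥ ·) fun F : Finset ι => ⋂ i ∈ F, S i :=
    fun F G => ⟨F ∪ G, biInter_mono Finset.subset_union_left fun _ _ => le_rfl,
      biInter_mono Finset.subset_union_right fun _ _ => le_rfl⟩
  rw [iInf_eq_iInf_finset, inf_comm]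
  simp only [iInf_principal_finset]
  refine (hasBasis_iInf_principal hdir).inf_neBot_iff.2 fun F _ s hs => ?_
  rw [← sdiff_compl, sdiff_nonempty]
  exact fun hsub => (mem_cocardinal.1 hs).not_ge ((hS F).trans (mk_le_mk_of_subset hsub))

theorem stmt2_general (l m : Cardinal) (hl : l.IsRegular) (hm : m.IsRegular)
    {ι : Type*} (f : ι → l.ord.ToType → m.ord.ToType) :
    (∃ D : Ultrafilter l.ord.ToType, IsUniformUltrafilter l D ∧
        ∀ β : ι, ¬ (∀ t ∈ Ultrafilter.map (f β) D, #t = m)) ↔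
      (∃ g : ι → m.ord.ToType, ∀ F : Finset ι,
        #(↥(⋂ β ∈ F, f β ⁻¹' Set.Iio (g β))) = l) := by
  constructor
  · rintro ⟨D, hD, hf⟩
    choose g hg using fun β => (not_isUniformUltrafilter_iff hm _).1 (hf β)
    exact ⟨g, fun F => hD _ ((biInter_finset_mem F).2 fun β _ => hg β)⟩
  · rintro ⟨g, hg⟩
    have := cocardinal_inf_iInf_principal_neBot hl _ fun F => (hg F).ge
    obtain ⟨D, hD⟩ :=
      Ultrafilter.exists_le (cocardinal _ hl ⊓ ⨅ β, 𝓟 (f β ⁻¹' Iio (g β)))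
    refine ⟨D, (isUniformUltrafilter_iff_le_cocardinal hl D).2 (hD.trans inf_le_left),
      fun β => (not_isUniformUltrafilter_iff hm _).2 ⟨g β, ?_⟩⟩
    exact hD.trans inf_le_right (mem_iInf_of_mem β (mem_principal_self _))

/-- There is an ultrafilter uniform over `λ` none of whose
pushforwards `f_β(D)` is uniform over `μ`, iff there is `g : κ → μ` such that
every finite intersection `⋂_{β ∈ F} f_β⁻¹ [0, g β)` has cardinality `λ`. -/
theorem stmt2 (l m : Cardinal) (hl : l.IsRegular) (hm : m.IsRegular) (hml : m ≤ l)
    {ι : Type*} (f : ι → l.ord.ToType → m.ord.ToType) :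
    (∃ D : Ultrafilter l.ord.ToType, IsUniformUltrafilter l D ∧
        ∀ β : ι, ¬ (∀ t ∈ Ultrafilter.map (f β) D, #t = m)) ↔
      (∃ g : ι → m.ord.ToType, ∀ F : Finset ι,
        #(↥(⋂ β ∈ F, f β ⁻¹' Set.Iio (g β))) = l) :=
  stmt2_general l m hl hm f
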